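/- Let k ≥ 2, c ∈ ℂ×, and λ ∈ ℂ× satisfy (z² + c)^{∘k} = (λz² + λc)^{∘k} as polynomials. Then λ = 1. (Comparing the leading coefficient gives λ^{2^k − 1} = 1; for k ≥ 2, comparing the coefficient of z^{2^k − 4} gives 2^{k−3}(2^k − 2)c² + 2^{k−2}c = 2^{k−3}(2^k − 2)λ^{2^k−1}c² + 2^{k−2}λ^{2^k−3}c, whence λ² = 1 and then λ = 1.) -/

import Mathlib

/-!
Put `f = z² + c`, `g = λ f`, `F = f^{∘k} = g^{∘k}` and `H = f^{∘(k-1)}`. Since `F` commutes with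
both `f` and `g`, we get `F ∘ g = g ∘ F = λ (F ∘ f)`, and unfolding `F = H² + c` this reads
`(H ∘ g)² - (μ H ∘ f)² = (λ - 1) c` with `μ² = λ`. If `λ ≠ 1`, this difference of squares is a
nonzero constant, so both factors `H ∘ g ∓ μ H ∘ f` are units, i.e. constants, and then so is
`H ∘ g`; but `H ∘ g` has degree `2^k`.
-/

open Polynomial

/-- The `n`-th compositional iterate of a polynomial. -/
noncomputable def polyIter (φ : Polynomial ℂ) (n : ℕ) : Polynomial ℂ :=
  (fun q => φ.comp q)^[n] Polynomial.X

theorem Polynomial.natDegree_eq_zero_of_isUnit_sq_sub_sq {R : Type*} [CommRing R] [IsDomain R]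
    [NeZero (2 : R)] {A B : R[X]} (h : IsUnit (A ^ 2 - B ^ 2)) : A.natDegree = 0 := by
  rw [sq_sub_sq, IsUnit.mul_iff] at h
  have hsum : (C 2 * A).natDegree = 0 := by
    rw [show C 2 * A = (A + B) + (A - B) by rw [C_ofNat]; ring]
    exact Nat.eq_zero_of_le_zero <| natDegree_add_le_of_degree_le
      (natDegree_eq_zero_of_isUnit h.1).le (natDegree_eq_zero_of_isUnit h.2).le
  rwa [natDegree_C_mul two_ne_zero] at hsum

section polyIter

variable (φ : ℂ[X])

theorem polyIter_succ' (n : ℕ) : polyIter φ (n + 1) = φ.comp (polyIter φ n) :=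
  Function.iterate_succ_apply' _ _ _

theorem polyIter_succ (n : ℕ) : polyIter φ (n + 1) = (polyIter φ n).comp φ := by
  induction n with
  | zero => simp [polyIter]
  | succ n ih => rw [polyIter_succ', ih, ← comp_assoc, ← polyIter_succ', ih]

theorem polyIter_comp_comm (n : ℕ) : (polyIter φ n).comp φ = φ.comp (polyIter φ n) := by
  rw [← polyIter_succ', polyIter_succ]

theorem natDegree_polyIter (n : ℕ) : (polyIter φ n).natDegree = φ.natDegree ^ n := by
  induction n with
  | zero => simp [polyIter]
  | succ n ih => rw [polyIter_succ', natDegree_comp, ih, pow_succ']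

end polyIter

/-- If `(z² + c)^{∘k} = (λz² + λc)^{∘k}` with `k ≥ 2` and `c, λ ≠ 0`,
then `λ = 1`. -/
theorem stmt9 (k : ℕ) (hk : 2 ≤ k) (c lam : ℂ) (hc : c ≠ 0) (hl : lam ≠ 0)
    (h : polyIter (X ^ 2 + C c) k = polyIter (C lam * X ^ 2 + C (lam * c)) k) :
    lam = 1 := by
  obtain ⟨j, rfl⟩ : ∃ j, k = j + 1 := ⟨k - 1, by omega⟩
  set f : ℂ[X] := X ^ 2 + C c
  set g : ℂ[X] := C lam * X ^ 2 + C (lam * c)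
  set H := polyIter f j
  have hg : g = C lam * f := by simp only [g, f, C_mul]; ring
  have hF : ∀ p : ℂ[X], (polyIter f (j + 1)).comp p = (H.comp p) ^ 2 + C c := fun p => by
    simp [polyIter_succ', H, f]
  have hcomm : (polyIter f (j + 1)).comp g = C lam * (polyIter f (j + 1)).comp f := by
    rw [h, polyIter_comp_comm, ← h, hg, mul_comp, C_comp, ← polyIter_comp_comm]
  obtain ⟨μ, hμ⟩ := IsAlgClosed.exists_eq_mul_self lam
  have hsq : (H.comp g) ^ 2 - (C μ * H.comp f) ^ 2 = C ((lam - 1) * c) := by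
    have hCμ : C lam = C μ ^ 2 := by rw [hμ, sq, C_mul]
    rw [hF, hF] at hcomm
    rw [map_mul, map_sub, map_one]
    linear_combination hcomm + (H.comp f) ^ 2 * hCμ
  by_contra hl1
  have hconst : (H.comp g).natDegree = 0 := natDegree_eq_zero_of_isUnit_sq_sub_sq <| by
    rw [hsq, isUnit_C]
    exact (mul_ne_zero (sub_ne_zero.mpr hl1) hc).isUnit
  have hf : f.natDegree = 2 := natDegree_X_pow_add_C
  rw [natDegree_comp, natDegree_polyIter, hg, natDegree_C_mul hl, hf] at hconst
  simp at hconst
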